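/- Let η₀ > 0, 0 < θ < 1, ν > 0, and set η_k = η₀·k^{-θ} for k ≥ 1. Then there exists a constant C > 0, independent of t, such that for every integer t ≥ 1: Σ_{k=1}^{t} η_k² / (1 + (Σ_{j=k+1}^{t} η_j)^{ν}) ≤ C·(t+1)^{ω}·log(t+1) if (ν,θ) ∈ Ω, and Σ_{k=1}^{t} η_k² / (1 + (Σ_{j=k+1}^{t} η_j)^{ν}) ≤ C·(t+1)^{ω} if (ν,θ) ∉ Ω. Here the inner sum Σ_{j=k+1}^{t} η_j is zero when k = t. -/

import Mathlib

open Real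

/-- The rate exponent `ω(ν,θ)` of Lemma 3: `ω = 1-2θ-ν+νθ` when `ν ≤ 1` and
`θ ≤ 1/2`; `ω = -θ` when `ν ≥ 1` and `θ ≤ ν/(ν+1)`; `ω = -ν(1-θ)` when
`θ ≥ 1/2` and `θ ≥ ν/(ν+1)` (the formulas agree on overlaps). -/
noncomputable def rateExp (ν θ : ℝ) : ℝ :=
  if ν ≤ 1 ∧ θ ≤ 1 / 2 then 1 - 2 * θ - ν + ν * θ
  else if 1 ≤ ν ∧ θ ≤ ν / (ν + 1) then -θ
  else -ν * (1 - θ)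

/-- The exceptional set `Ω = {(ν,θ) : 0 < ν ≤ 1, θ = 1/2} ∪ {(ν,θ) : ν = 1, 0 < θ ≤ 1/2}`
on which a logarithmic factor appears. -/
def logSet : Set (ℝ × ℝ) :=
  {p | (0 < p.1 ∧ p.1 ≤ 1 ∧ p.2 = 1 / 2) ∨ (p.1 = 1 ∧ 0 < p.2 ∧ p.2 ≤ 1 / 2)}

/-!
Write `η_k = η₀ k^{-θ}`; the inner sum satisfies `∑_{j=k+1}^t η_j ≥ (t - k) η_t`. Split the sum at
`k = t/2`: for `k ≤ t/2` the denominator is at least `((η₀/2) t^{1-θ})^ν`, for `k > t/2` the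
numerator is at most `η₀² (t/2)^{-2θ}`. The remaining sums `∑_k k^{-2θ}` and
`∑_{m<t} (1 + η_t m)^{-ν}` are compared with integrals of `v^{-q}` over `[1, X]`, which grow like
`X^{1-q}`, `log X` or `1` according as `q < 1`, `q = 1` or `q > 1`. This bounds the two halves by
`t^headExp` and `t^tailExp`, with an extra logarithm when `2θ = 1`, resp. `ν = 1`. The exponent `ω`
is the larger of the two, and a logarithm survives exactly when a logarithmic half attains the
maximum, which is the case `(ν, θ) ∈ Ω`.
-/

open Filter Asymptotics Finset intervalIntegral

section Integrals

variable {q x : ℝ}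

lemma integral_rpow_neg_le_mul_log (hx : 1 ≤ x) :
    ∫ v in (1:ℝ)..x, v ^ (-q) ≤ x ^ max (1 - q) 0 * log x := by
  have h0 : (0:ℝ) ∉ Set.uIcc 1 x := Set.notMem_uIcc_of_lt one_pos (by linarith)
  calc ∫ v in (1:ℝ)..x, v ^ (-q) ≤ ∫ v in (1:ℝ)..x, x ^ max (1 - q) 0 * v⁻¹ := by
        refine integral_mono_on hx (intervalIntegrable_rpow (Or.inr h0))
          ((intervalIntegrable_inv (fun v hv => ne_of_mem_of_not_mem hv h0)
            continuousOn_id).const_mul _) fun v hv => ?_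
        have hv0 : 0 < v := by linarith [hv.1]
        rw [show -q = (1 - q) + -1 by ring, rpow_add hv0, rpow_neg_one]
        gcongr
        calc v ^ (1 - q) ≤ v ^ max (1 - q) 0 := rpow_le_rpow_of_exponent_le hv.1 (le_max_left _ _)
          _ ≤ x ^ max (1 - q) 0 := by gcongr; exact hv.2
    _ = x ^ max (1 - q) 0 * log x := by
        rw [integral_const_mul, integral_inv_of_pos one_pos (by linarith), div_one]

lemma integral_rpow_neg_le_div (hq : q ≠ 1) (hx : 1 ≤ x) :
    ∫ v in (1:ℝ)..x, v ^ (-q) ≤ x ^ max (1 - q) 0 / |1 - q| := by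
  have h0 : (0:ℝ) ∉ Set.uIcc 1 x := Set.notMem_uIcc_of_lt one_pos (by linarith)
  rw [integral_rpow (Or.inr ⟨by contrapose! hq; linarith, h0⟩), one_rpow,
    show -q + 1 = 1 - q by ring]
  rcases lt_or_gt_of_ne hq with hq | hq
  · rw [max_eq_left (by linarith), abs_of_pos (by linarith)]
    gcongr
    linarith
  · rw [max_eq_right (by linarith), abs_of_neg (by linarith), rpow_zero, div_neg,
      ← neg_div]
    exact div_le_div_of_nonpos_of_le (by linarith)
      (by linarith [rpow_nonneg (by linarith : (0:ℝ) ≤ x) (1 - q)])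

end Integrals

lemma sum_range_one_add_mul_rpow_neg_le {β ν : ℝ} (hβ : 0 < β) (hν : 0 ≤ ν) (n : ℕ) :
    ∑ m ∈ range n, (1 + β * m) ^ (-ν) ≤ 1 + β⁻¹ * ∫ v in (1:ℝ)..1 + β * n, v ^ (-ν) := by
  set f : ℝ → ℝ := fun x => (1 + β * x) ^ (-ν)
  have hanti : AntitoneOn f (Set.Icc 0 (0 + n)) := fun a ha b _ hab =>
    rpow_le_rpow_of_nonpos (by nlinarith [ha.1]) (by nlinarith) (by linarith)
  have hint : ∫ x in (0:ℝ)..0 + n, f x = β⁻¹ * ∫ v in (1:ℝ)..1 + β * n, v ^ (-ν) := by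
    simp only [f, zero_add]
    rw [integral_comp_add_mul (fun v => v ^ (-ν)) hβ.ne', mul_zero, add_zero, smul_eq_mul]
  have hsum : ∑ m ∈ range n, f m ≤ 1 + ∑ i ∈ range n, f (0 + ↑(i + 1)) := by
    simp only [zero_add]
    rcases n with _ | k
    · simp
    rw [sum_range_succ', add_comm]
    refine add_le_add (by simp [f]) (sum_le_sum_of_subset_of_nonneg
      (range_subset_range.2 (Nat.le_succ k)) fun i _ _ => rpow_nonneg (by positivity) _)
  exact hsum.trans (by rw [← hint]; gcongr; exact hanti.sum_le_integral)

lemma inv_one_add_rpow_le {a ν : ℝ} (ha : 0 ≤ a) (hν : 0 ≤ ν) :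
    (1 + a ^ ν)⁻¹ ≤ 2 ^ ν * (1 + a) ^ (-ν) := by
  have key : (1 + a) ^ ν ≤ 2 ^ ν * (1 + a ^ ν) := by
    rcases le_total a 1 with h | h
    · calc (1 + a) ^ ν ≤ 2 ^ ν := rpow_le_rpow (by positivity) (by linarith) hν
        _ ≤ 2 ^ ν * (1 + a ^ ν) :=
          le_mul_of_one_le_right (by positivity) (by linarith [rpow_nonneg ha ν])
    · calc (1 + a) ^ ν ≤ (2 * a) ^ ν := rpow_le_rpow (by positivity) (by linarith) hν
        _ = 2 ^ ν * a ^ ν := mul_rpow (by norm_num) ha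
        _ ≤ 2 ^ ν * (1 + a ^ ν) := by gcongr; linarith
  rw [rpow_neg (by positivity), ← div_eq_mul_inv, inv_eq_one_div,
    div_le_div_iff₀ (by positivity) (by positivity), one_mul]
  linarith

lemma sum_Icc_one_eq_sum_range {M : Type*} [AddCommMonoid M] (f : ℕ → M) (t : ℕ) :
    ∑ k ∈ Icc 1 t, f k = ∑ i ∈ range t, f (i + 1) := by
  rw [range_eq_Ico, sum_Ico_add' f 0 t 1, ← Finset.Ico_add_one_right_eq_Icc]

noncomputable section

def stepSizeSum (η₀ θ ν : ℝ) (t : ℕ) : ℝ :=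
  ∑ k ∈ Icc 1 t, (η₀ * (k : ℝ) ^ (-θ)) ^ 2 / (1 + (∑ j ∈ Icc (k + 1) t, η₀ * (j : ℝ) ^ (-θ)) ^ ν)

def headBound (θ ν x : ℝ) : ℝ := x ^ (-(ν * (1 - θ))) * (1 + ∫ v in (1:ℝ)..1 + x, v ^ (-(2 * θ)))

def tailBound (η₀ θ ν x : ℝ) : ℝ :=
  x ^ (-(2 * θ)) * (1 + (η₀ * x ^ (-θ))⁻¹ * ∫ v in (1:ℝ)..1 + η₀ * x ^ (-θ) * x, v ^ (-ν))

def majorant (η₀ θ ν x : ℝ) : ℝ :=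
  (η₀ / 2) ^ (-ν) * headBound θ ν x + 2 ^ (2 * θ) * tailBound η₀ θ ν x

end

section StepSizes

variable {η₀ θ ν : ℝ}

lemma mul_card_le_sum_Icc_step (hη₀ : 0 ≤ η₀) (hθ : 0 ≤ θ) (k t : ℕ) :
    η₀ * (t : ℝ) ^ (-θ) * (t - k : ℕ) ≤ ∑ j ∈ Icc (k + 1) t, η₀ * (j : ℝ) ^ (-θ) := by
  have := card_nsmul_le_sum (Icc (k + 1) t) (fun j : ℕ => η₀ * (j : ℝ) ^ (-θ))
    (η₀ * (t : ℝ) ^ (-θ)) fun j hj => by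
      have hj := mem_Icc.1 hj
      exact mul_le_mul_of_nonneg_left (rpow_le_rpow_of_nonpos (by exact_mod_cast (by omega : 0 < j))
        (by exact_mod_cast hj.2) (by linarith)) hη₀
  simpa [mul_comm, Nat.card_Icc, (by omega : t + 1 - (k + 1) = t - k)] using this

lemma one_add_mul_rpow_neg_le_of_two_mul_le (hη₀ : 0 < η₀) (hν : 0 ≤ ν) {t k : ℕ}
    (hk : 1 ≤ k) (hkt : 2 * k ≤ t) :
    (1 + η₀ * (t : ℝ) ^ (-θ) * (t - k : ℕ)) ^ (-ν) ≤
      (η₀ / 2) ^ (-ν) * (t : ℝ) ^ (-(ν * (1 - θ))) := by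
  have ht0 : (0 : ℝ) < t := by exact_mod_cast (by omega : 0 < t)
  have hkt' : 2 * (k : ℝ) ≤ t := by exact_mod_cast hkt
  have hbase : η₀ / 2 * (t : ℝ) ^ (1 - θ) ≤ 1 + η₀ * (t : ℝ) ^ (-θ) * (t - k : ℕ) := by
    have : η₀ / 2 * (t : ℝ) ^ (1 - θ) = η₀ * (t : ℝ) ^ (-θ) * (t / 2) := by
      rw [sub_eq_neg_add, rpow_add ht0, rpow_one]; ring
    rw [this, Nat.cast_sub (by omega)]
    nlinarith [(by positivity : 0 < η₀ * (t : ℝ) ^ (-θ))]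
  calc _ ≤ (η₀ / 2 * (t : ℝ) ^ (1 - θ)) ^ (-ν) :=
        rpow_le_rpow_of_nonpos (by positivity) hbase (by linarith)
    _ = _ := by rw [mul_rpow (by positivity) (by positivity), ← rpow_mul ht0.le]; ring_nf

lemma natCast_rpow_neg_le_of_lt_two_mul (hθ : 0 ≤ θ) {t k : ℕ} (ht : 1 ≤ t) (hkt : t < 2 * k) :
    (k : ℝ) ^ (-(2 * θ)) ≤ 2 ^ (2 * θ) * (t : ℝ) ^ (-(2 * θ)) := by
  have ht0 : (0 : ℝ) < t := by exact_mod_cast ht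
  have hkt' : (t : ℝ) / 2 ≤ k := by
    have : (t : ℝ) < 2 * k := by exact_mod_cast hkt
    linarith
  calc (k : ℝ) ^ (-(2 * θ)) ≤ ((t : ℝ) / 2) ^ (-(2 * θ)) :=
        rpow_le_rpow_of_nonpos (by positivity) hkt' (by linarith)
    _ = _ := by rw [div_rpow ht0.le (by norm_num), rpow_neg (by norm_num : (0:ℝ) ≤ 2),
          div_inv_eq_mul, mul_comm]

lemma stepSizeSum_term_le (hη₀ : 0 < η₀) (hθ : 0 ≤ θ) (hν : 0 ≤ ν) {t k : ℕ} (hk : 1 ≤ k)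
    (hkt : k ≤ t) :
    (η₀ * (k : ℝ) ^ (-θ)) ^ 2 / (1 + (∑ j ∈ Icc (k + 1) t, η₀ * (j : ℝ) ^ (-θ)) ^ ν) ≤
      2 ^ ν * η₀ ^ 2 * ((η₀ / 2) ^ (-ν) * ((t : ℝ) ^ (-(ν * (1 - θ))) * (k : ℝ) ^ (-(2 * θ))) +
        2 ^ (2 * θ) * ((t : ℝ) ^ (-(2 * θ)) * (1 + η₀ * (t : ℝ) ^ (-θ) * (t - k : ℕ)) ^ (-ν))) := by
  set D := (1 + η₀ * (t : ℝ) ^ (-θ) * (t - k : ℕ)) ^ (-ν)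
  have hsq : (η₀ * (k : ℝ) ^ (-θ)) ^ 2 = η₀ ^ 2 * (k : ℝ) ^ (-(2 * θ)) := by
    rw [mul_pow, ← rpow_mul_natCast (by positivity)]; push_cast; ring_nf
  have hden : (1 + (∑ j ∈ Icc (k + 1) t, η₀ * (j : ℝ) ^ (-θ)) ^ ν)⁻¹ ≤ 2 ^ ν * D :=
    (inv_one_add_rpow_le (by positivity) hν).trans <| mul_le_mul_of_nonneg_left
      (rpow_le_rpow_of_nonpos (by positivity) (by linarith [mul_card_le_sum_Icc_step hη₀.le hθ k t])
        (by linarith)) (by positivity)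
  have hmain : (η₀ * (k : ℝ) ^ (-θ)) ^ 2 / (1 + (∑ j ∈ Icc (k + 1) t, η₀ * (j : ℝ) ^ (-θ)) ^ ν) ≤
      2 ^ ν * η₀ ^ 2 * ((k : ℝ) ^ (-(2 * θ)) * D) := by
    rw [div_eq_mul_inv, hsq]
    calc _ ≤ η₀ ^ 2 * (k : ℝ) ^ (-(2 * θ)) * (2 ^ ν * D) := by gcongr
      _ = _ := by ring
  refine hmain.trans (mul_le_mul_of_nonneg_left ?_ (by positivity))
  have hk2 : 0 ≤ (k : ℝ) ^ (-(2 * θ)) := by positivity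
  have hD : 0 ≤ D := by positivity
  rcases le_or_gt (2 * k) t with hsplit | hsplit
  · nlinarith [mul_le_mul_of_nonneg_left (one_add_mul_rpow_neg_le_of_two_mul_le (θ := θ) hη₀ hν hk
      hsplit) hk2, (by positivity : 0 ≤ 2 ^ (2 * θ) * ((t : ℝ) ^ (-(2 * θ)) * D))]
  · nlinarith [mul_le_mul_of_nonneg_right (natCast_rpow_neg_le_of_lt_two_mul hθ (hk.trans hkt)
      hsplit) hD, (by positivity : 0 ≤ (η₀ / 2) ^ (-ν) * ((t : ℝ) ^ (-(ν * (1 - θ))) *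
        (k : ℝ) ^ (-(2 * θ))))]

lemma stepSizeSum_le (hη₀ : 0 < η₀) (hθ : 0 ≤ θ) (hν : 0 ≤ ν) {t : ℕ} (ht : 1 ≤ t) :
    stepSizeSum η₀ θ ν t ≤ 2 ^ ν * η₀ ^ 2 * majorant η₀ θ ν t := by
  set β := η₀ * (t : ℝ) ^ (-θ)
  have hβ : 0 < β := by positivity
  have hP : ∑ k ∈ Icc 1 t, (k : ℝ) ^ (-(2 * θ)) ≤ 1 + ∫ v in (1:ℝ)..1 + t, v ^ (-(2 * θ)) := by
    have := sum_range_one_add_mul_rpow_neg_le one_pos (by positivity : 0 ≤ 2 * θ) t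
    simp only [one_mul, inv_one] at this
    rw [sum_Icc_one_eq_sum_range]
    convert this using 3 with i
    push_cast; ring
  have hQ : ∑ k ∈ Icc 1 t, (1 + β * ((t - k : ℕ) : ℝ)) ^ (-ν) ≤
      1 + β⁻¹ * ∫ v in (1:ℝ)..1 + β * t, v ^ (-ν) := by
    rw [sum_Icc_one_eq_sum_range, ← sum_range_reflect]
    convert sum_range_one_add_mul_rpow_neg_le hβ hν t using 3 with i hi
    rw [mem_range] at hi
    congr 4
    omega
  calc stepSizeSum η₀ θ ν t
      ≤ ∑ k ∈ Icc 1 t, 2 ^ ν * η₀ ^ 2 * ((η₀ / 2) ^ (-ν) * ((t : ℝ) ^ (-(ν * (1 - θ))) *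
          (k : ℝ) ^ (-(2 * θ))) + 2 ^ (2 * θ) * ((t : ℝ) ^ (-(2 * θ)) *
          (1 + β * ((t - k : ℕ) : ℝ)) ^ (-ν))) :=
        sum_le_sum fun k hk => stepSizeSum_term_le hη₀ hθ hν (mem_Icc.1 hk).1 (mem_Icc.1 hk).2
    _ = 2 ^ ν * η₀ ^ 2 * ((η₀ / 2) ^ (-ν) * ((t : ℝ) ^ (-(ν * (1 - θ))) *
          ∑ k ∈ Icc 1 t, (k : ℝ) ^ (-(2 * θ))) + 2 ^ (2 * θ) * ((t : ℝ) ^ (-(2 * θ)) *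
          ∑ k ∈ Icc 1 t, (1 + β * ((t - k : ℕ) : ℝ)) ^ (-ν))) := by
        simp only [← mul_sum, sum_add_distrib]
    _ ≤ 2 ^ ν * η₀ ^ 2 * majorant η₀ θ ν t := by
        unfold majorant headBound tailBound
        gcongr

end StepSizes

section Asymptotics

variable {a b : ℝ}

lemma rpow_isBigO_rpow (h : a ≤ b) : (fun x : ℝ => x ^ a) =O[atTop] fun x => x ^ b :=
  IsBigO.of_bound 1 <| (eventually_ge_atTop 1).mono fun x hx => by
    rw [one_mul, norm_of_nonneg (by positivity), norm_of_nonneg (by positivity)]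
    exact rpow_le_rpow_of_exponent_le hx h

lemma one_isBigO_log : (fun _ : ℝ => (1 : ℝ)) =O[atTop] log :=
  IsBigO.of_bound 1 <| (eventually_ge_atTop (exp 1)).mono fun x hx => by
    rw [one_mul, norm_one, norm_of_nonneg (by linarith [log_exp 1 ▸ log_le_log (exp_pos 1) hx])]
    exact log_exp 1 ▸ log_le_log (exp_pos 1) hx

lemma one_isBigO_rpow (hb : 0 ≤ b) : (fun _ : ℝ => (1 : ℝ)) =O[atTop] fun x => x ^ b := by
  simpa using rpow_isBigO_rpow hb

lemma one_isBigO_rpow_mul_log (hb : 0 ≤ b) :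
    (fun _ : ℝ => (1 : ℝ)) =O[atTop] fun x => x ^ b * log x := by
  simpa using (one_isBigO_rpow hb).mul one_isBigO_log

lemma rpow_mul_log_isBigO_rpow_mul_log (h : a ≤ b) :
    (fun x : ℝ => x ^ a * log x) =O[atTop] fun x => x ^ b * log x :=
  (rpow_isBigO_rpow h).mul (isBigO_refl _ _)

lemma rpow_mul_log_isBigO_rpow (h : a < b) :
    (fun x : ℝ => x ^ a * log x) =O[atTop] fun x => x ^ b := by
  refine ((isBigO_refl (fun x : ℝ => x ^ a) atTop).mul
    (isLittleO_log_rpow_atTop (sub_pos.2 h)).isBigO).trans_eventuallyEq ?_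
  filter_upwards [eventually_gt_atTop 0] with x hx
  rw [← rpow_add hx, add_sub_cancel]

lemma Asymptotics.IsBigO.rpow_mul {f g : ℝ → ℝ} (h : f =O[atTop] fun x => x ^ b * g x) :
    (fun x => x ^ a * f x) =O[atTop] fun x => x ^ (a + b) * g x := by
  refine ((isBigO_refl (fun x : ℝ => x ^ a) atTop).mul h).trans_eventuallyEq ?_
  filter_upwards [eventually_gt_atTop 0] with x hx
  rw [rpow_add hx, mul_assoc]

end Asymptotics

section Comparison

variable {q κ s : ℝ} {X : ℝ → ℝ}

lemma rpow_comp_isBigO (hκ : 0 < κ) (hX : ∀ᶠ x in atTop, 1 ≤ X x ∧ X x ≤ κ * x ^ s) {m : ℝ}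
    (hm : 0 ≤ m) : (fun x => X x ^ m) =O[atTop] fun x => x ^ (s * m) :=
  IsBigO.of_bound (κ ^ m) <| (hX.and (eventually_gt_atTop 0)).mono fun x ⟨⟨h1, h2⟩, hx⟩ => by
    rw [norm_of_nonneg (by positivity), norm_of_nonneg (by positivity), rpow_mul hx.le,
      ← mul_rpow hκ.le (by positivity)]
    exact rpow_le_rpow (by linarith) h2 hm

lemma log_comp_isBigO_log (hκ : 1 ≤ κ)
    (hX : ∀ᶠ x in atTop, 1 ≤ X x ∧ X x ≤ κ * x ^ s) :
    (fun x => log (X x)) =O[atTop] log :=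
  IsBigO.of_bound (log κ + s) <| (hX.and (eventually_ge_atTop (exp 1))).mono
    fun x ⟨⟨h1, h2⟩, hx⟩ => by
    have hx0 : 0 < x := lt_of_lt_of_le (exp_pos 1) hx
    have hlogx : 1 ≤ log x := log_exp 1 ▸ log_le_log (exp_pos 1) hx
    have hlogκ : 0 ≤ log κ := log_nonneg hκ
    rw [norm_of_nonneg (log_nonneg h1), norm_of_nonneg (by linarith)]
    calc log (X x) ≤ log (κ * x ^ s) := log_le_log (by linarith) h2
      _ = log κ + s * log x := by rw [log_mul (by positivity) (by positivity), log_rpow hx0]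
      _ ≤ (log κ + s) * log x := by nlinarith

lemma integral_rpow_neg_comp_isBigO_mul_log (hκ : 1 ≤ κ)
    (hX : ∀ᶠ x in atTop, 1 ≤ X x ∧ X x ≤ κ * x ^ s) :
    (fun x => ∫ v in (1:ℝ)..X x, v ^ (-q)) =O[atTop]
      fun x => x ^ (s * max (1 - q) 0) * log x := by
  refine IsBigO.trans ?_ ((rpow_comp_isBigO (by linarith) hX (le_max_right _ _)).mul
    (log_comp_isBigO_log hκ hX))
  refine IsBigO.of_bound 1 <| hX.mono fun x ⟨h1, _⟩ => ?_
  rw [one_mul, norm_of_nonneg (intervalIntegral.integral_nonneg h1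
    fun v hv => rpow_nonneg (by linarith [hv.1]) _),
    norm_of_nonneg (mul_nonneg (by positivity) (log_nonneg h1))]
  exact integral_rpow_neg_le_mul_log h1

lemma integral_rpow_neg_comp_isBigO (hq : q ≠ 1) (hκ : 1 ≤ κ)
    (hX : ∀ᶠ x in atTop, 1 ≤ X x ∧ X x ≤ κ * x ^ s) :
    (fun x => ∫ v in (1:ℝ)..X x, v ^ (-q)) =O[atTop] fun x => x ^ (s * max (1 - q) 0) := by
  refine IsBigO.trans ?_ (rpow_comp_isBigO (by linarith) hX (le_max_right _ _))
  refine IsBigO.of_bound |1 - q|⁻¹ <| hX.mono fun x ⟨h1, _⟩ => ?_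
  rw [norm_of_nonneg (intervalIntegral.integral_nonneg h1
    fun v hv => rpow_nonneg (by linarith [hv.1]) _), norm_of_nonneg (by positivity),
    inv_mul_eq_div]
  exact integral_rpow_neg_le_div hq h1

end Comparison

def headExp (ν θ : ℝ) : ℝ := -(ν * (1 - θ)) + max (1 - 2 * θ) 0

def tailExp (ν θ : ℝ) : ℝ := -θ + (1 - θ) * max (1 - ν) 0

section Majorant

variable {η₀ θ ν : ℝ}

lemma eventually_one_add_self_le : ∀ᶠ x : ℝ in atTop, 1 ≤ 1 + x ∧ 1 + x ≤ 2 * x ^ (1:ℝ) :=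
  (eventually_ge_atTop 1).mono fun x hx => ⟨by linarith, by rw [rpow_one]; linarith⟩

lemma eventually_one_add_step_le (hη₀ : 0 < η₀) (hθ1 : θ ≤ 1) :
    ∀ᶠ x : ℝ in atTop, 1 ≤ 1 + η₀ * x ^ (-θ) * x ∧
      1 + η₀ * x ^ (-θ) * x ≤ (1 + η₀) * x ^ (1 - θ) :=
  (eventually_ge_atTop 1).mono fun x hx => by
    have hx0 : 0 < x := by linarith
    have h : η₀ * x ^ (-θ) * x = η₀ * x ^ (1 - θ) := by
      rw [sub_eq_neg_add, rpow_add hx0, rpow_one, mul_assoc]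
    have h1 : 1 ≤ x ^ (1 - θ) := one_le_rpow hx (by linarith)
    rw [h]
    exact ⟨by nlinarith, by nlinarith⟩

lemma headBound_isBigO_of_integral {g : ℝ → ℝ}
    (h1 : (fun _ : ℝ => (1 : ℝ)) =O[atTop] fun x => x ^ max (1 - 2 * θ) 0 * g x)
    (hJ : (fun x => ∫ v in (1:ℝ)..1 + x, v ^ (-(2 * θ))) =O[atTop]
      fun x => x ^ (1 * max (1 - 2 * θ) 0) * g x) :
    headBound θ ν =O[atTop] fun x => x ^ headExp ν θ * g x := by
  rw [one_mul] at hJ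
  exact (h1.add hJ).rpow_mul

lemma tailBound_isBigO_of_integral {g : ℝ → ℝ}
    (h1 : (fun _ : ℝ => (1 : ℝ)) =O[atTop] fun x => x ^ (θ + (1 - θ) * max (1 - ν) 0) * g x)
    (hJ : (fun x => ∫ v in (1:ℝ)..1 + η₀ * x ^ (-θ) * x, v ^ (-ν)) =O[atTop]
      fun x => x ^ ((1 - θ) * max (1 - ν) 0) * g x) :
    tailBound η₀ θ ν =O[atTop] fun x => x ^ tailExp ν θ * g x := by
  have hf : (fun x => (η₀ * x ^ (-θ))⁻¹ * ∫ v in (1:ℝ)..1 + η₀ * x ^ (-θ) * x, v ^ (-ν))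
      =O[atTop] fun x => x ^ (θ + (1 - θ) * max (1 - ν) 0) * g x := by
    refine ((hJ.rpow_mul (a := θ)).const_mul_left η₀⁻¹).congr' ?_ EventuallyEq.rfl
    filter_upwards [eventually_gt_atTop 0] with x hx
    rw [mul_inv, ← rpow_neg hx.le, neg_neg]
    ring
  have h := (h1.add hf).rpow_mul (a := -(2 * θ))
  rwa [show -(2 * θ) + (θ + (1 - θ) * max (1 - ν) 0) = tailExp ν θ by rw [tailExp]; ring] at h

lemma headBound_isBigO_rpow_mul_log :
    headBound θ ν =O[atTop] fun x => x ^ headExp ν θ * log x :=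
  headBound_isBigO_of_integral (one_isBigO_rpow_mul_log (le_max_right _ _))
    (integral_rpow_neg_comp_isBigO_mul_log one_le_two eventually_one_add_self_le)

lemma headBound_isBigO_rpow (hθ : θ ≠ 1 / 2) :
    headBound θ ν =O[atTop] fun x => x ^ headExp ν θ := by
  have hJ := integral_rpow_neg_comp_isBigO (q := 2 * θ) (by contrapose! hθ; linarith)
    one_le_two eventually_one_add_self_le
  simpa using headBound_isBigO_of_integral (ν := ν) (g := fun _ => 1)
    (by simpa using one_isBigO_rpow (le_max_right _ _)) (by simpa using hJ)

lemma tailBound_isBigO_rpow_mul_log (hη₀ : 0 < η₀) (hθ : 0 ≤ θ) (hθ1 : θ ≤ 1) :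
    tailBound η₀ θ ν =O[atTop] fun x => x ^ tailExp ν θ * log x :=
  tailBound_isBigO_of_integral (one_isBigO_rpow_mul_log (by nlinarith [le_max_right (1 - ν) 0]))
    (integral_rpow_neg_comp_isBigO_mul_log (by linarith) (eventually_one_add_step_le hη₀ hθ1))

lemma tailBound_isBigO_rpow (hη₀ : 0 < η₀) (hθ : 0 ≤ θ) (hθ1 : θ ≤ 1) (hν : ν ≠ 1) :
    tailBound η₀ θ ν =O[atTop] fun x => x ^ tailExp ν θ := by
  have hJ := integral_rpow_neg_comp_isBigO hν (by linarith) (eventually_one_add_step_le hη₀ hθ1)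
  simpa using tailBound_isBigO_of_integral (g := fun _ => 1)
    (by simpa using one_isBigO_rpow (by nlinarith [le_max_right (1 - ν) 0])) (by simpa using hJ)

end Majorant

section Exponents

variable {θ ν : ℝ}

lemma rateExp_eq_max (hν : 0 < ν) :
    rateExp ν θ = max (headExp ν θ) (tailExp ν θ) := by
  have hdiv : θ ≤ ν / (ν + 1) ↔ θ * (ν + 1) ≤ ν := le_div_iff₀ (by linarith)
  unfold rateExp headExp tailExp
  split_ifs with h1 h2
  · rw [max_eq_left (by linarith : (0:ℝ) ≤ 1 - 2 * θ), max_eq_left (by linarith : (0:ℝ) ≤ 1 - ν),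
      max_eq_left (by nlinarith)]
    ring
  · obtain ⟨hν1, h2⟩ := h2
    rw [hdiv] at h2
    rw [max_eq_right (by linarith : 1 - ν ≤ 0), mul_zero, add_zero, max_eq_right]
    rcases le_total (1 - 2 * θ) 0 with h | h
    · rw [max_eq_right h]; nlinarith
    · rw [max_eq_left h]; nlinarith
  · rw [hdiv] at h2
    have hθ2 : 1 / 2 < θ := by
      by_contra! h
      rcases le_or_gt ν 1 with hν1 | hν1
      · exact h1 ⟨hν1, h⟩
      · exact h2 ⟨hν1.le, by nlinarith⟩
    rw [max_eq_right (by linarith : 1 - 2 * θ ≤ 0), add_zero, max_eq_left]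
    · ring
    rcases le_total (1 - ν) 0 with h | h
    · rw [max_eq_right h]; nlinarith [not_le.1 (not_and.1 h2 (by linarith))]
    · rw [max_eq_left h]; nlinarith

lemma headExp_lt_rateExp (hν : 0 < ν) (hθ : θ = 1 / 2) (hΩ : (ν, θ) ∉ logSet) :
    headExp ν θ < rateExp ν θ := by
  have hν1 : 1 < ν := by
    by_contra! h
    exact hΩ (Or.inl ⟨hν, h, hθ⟩)
  rw [rateExp_eq_max hν]
  refine lt_max_of_lt_right ?_
  simp only [headExp, tailExp, hθ, max_eq_right (by linarith : 1 - ν ≤ 0)]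
  norm_num
  linarith

lemma tailExp_lt_rateExp (hν : ν = 1) (hθ : 0 < θ) (hΩ : (ν, θ) ∉ logSet) :
    tailExp ν θ < rateExp ν θ := by
  have hθ2 : 1 / 2 < θ := by
    by_contra! h
    exact hΩ (Or.inr ⟨hν, hθ, h⟩)
  rw [rateExp_eq_max (by linarith)]
  refine lt_max_of_lt_left ?_
  simp only [headExp, tailExp, hν, max_eq_right (by linarith : 1 - 2 * θ ≤ 0)]
  norm_num
  linarith

end Exponents

section Rates

variable {η₀ θ ν : ℝ}

lemma majorant_isBigO_rpow_mul_log (hη₀ : 0 < η₀) (hν : 0 < ν) (hθ : 0 ≤ θ) (hθ1 : θ ≤ 1) :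
    majorant η₀ θ ν =O[atTop] fun x => x ^ rateExp ν θ * log x := by
  rw [rateExp_eq_max hν]
  exact ((headBound_isBigO_rpow_mul_log.trans
      (rpow_mul_log_isBigO_rpow_mul_log (le_max_left _ _))).const_mul_left _).add
    (((tailBound_isBigO_rpow_mul_log hη₀ hθ hθ1).trans
      (rpow_mul_log_isBigO_rpow_mul_log (le_max_right _ _))).const_mul_left _)

lemma majorant_isBigO_rpow (hη₀ : 0 < η₀) (hν : 0 < ν) (hθ : 0 < θ) (hθ1 : θ ≤ 1)
    (hΩ : (ν, θ) ∉ logSet) :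
    majorant η₀ θ ν =O[atTop] fun x => x ^ rateExp ν θ := by
  have hhead : headBound θ ν =O[atTop] fun x => x ^ rateExp ν θ := by
    by_cases h : θ = 1 / 2
    · exact headBound_isBigO_rpow_mul_log.trans
        (rpow_mul_log_isBigO_rpow (headExp_lt_rateExp hν h hΩ))
    · exact (headBound_isBigO_rpow h).trans
        (rpow_isBigO_rpow (rateExp_eq_max hν ▸ le_max_left _ _))
  have htail : tailBound η₀ θ ν =O[atTop] fun x => x ^ rateExp ν θ := by
    by_cases h : ν = 1
    · exact (tailBound_isBigO_rpow_mul_log hη₀ hθ.le hθ1).trans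
        (rpow_mul_log_isBigO_rpow (tailExp_lt_rateExp h hθ hΩ))
    · exact (tailBound_isBigO_rpow hη₀ hθ.le hθ1 h).trans
        (rpow_isBigO_rpow (rateExp_eq_max hν ▸ le_max_right _ _))
  exact (hhead.const_mul_left _).add (htail.const_mul_left _)

lemma stepSizeSum_isBigO_majorant (hη₀ : 0 < η₀) (hθ : 0 ≤ θ) (hν : 0 ≤ ν) :
    stepSizeSum η₀ θ ν =O[atTop] fun t : ℕ => majorant η₀ θ ν t :=
  IsBigO.of_bound (2 ^ ν * η₀ ^ 2) <| (eventually_ge_atTop 1).mono fun t ht => by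
    rw [norm_of_nonneg (by unfold stepSizeSum; positivity)]
    exact (stepSizeSum_le hη₀ hθ hν ht).trans (by gcongr; exact le_norm_self _)

lemma natCast_rpow_isBigO_add_one (a : ℝ) :
    (fun t : ℕ => (t : ℝ) ^ a) =O[atTop] fun t : ℕ => ((t : ℝ) + 1) ^ a :=
  (IsEquivalent.rpow (fun t => by positivity)
    (isEquivalent_of_tendsto_one (tendsto_natCast_div_add_atTop 1))).isBigO

lemma natCast_rpow_mul_log_isBigO_add_one (a : ℝ) :
    (fun t : ℕ => (t : ℝ) ^ a * log t) =O[atTop]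
      fun t : ℕ => ((t : ℝ) + 1) ^ a * log ((t : ℝ) + 1) :=
  (natCast_rpow_isBigO_add_one a).mul <| IsBigO.of_bound 1 <| (eventually_ge_atTop 1).mono
    fun t ht => by
      have ht' : (1 : ℝ) ≤ t := by exact_mod_cast ht
      rw [one_mul, norm_of_nonneg (log_nonneg ht'), norm_of_nonneg (log_nonneg (by linarith))]
      exact log_le_log (by linarith) (by linarith)

lemma exists_pos_le_mul_of_isBigO {f g : ℕ → ℝ} (h : f =O[atTop] g) (hg : ∀ t, 0 ≤ g t)
    (hfg : ∀ t, g t = 0 → f t = 0) : ∃ C, 0 < C ∧ ∀ t, f t ≤ C * g t := by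
  obtain ⟨C, hC⟩ := (isBigO_nat_atTop_iff hfg).1 h
  refine ⟨max C 1, by positivity, fun t => ?_⟩
  calc f t ≤ ‖f t‖ := le_norm_self _
    _ ≤ C * g t := by simpa [norm_of_nonneg (hg t)] using hC t
    _ ≤ max C 1 * g t := by gcongr; exacts [hg t, le_max_left _ _]

lemma stepSizeSum_isBigO_rpow_mul_log (hη₀ : 0 < η₀) (hθ : 0 ≤ θ) (hθ1 : θ ≤ 1) (hν : 0 < ν) :
    stepSizeSum η₀ θ ν =O[atTop] fun t : ℕ => ((t : ℝ) + 1) ^ rateExp ν θ * log ((t : ℝ) + 1) :=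
  (stepSizeSum_isBigO_majorant hη₀ hθ hν.le).trans
    (((majorant_isBigO_rpow_mul_log hη₀ hν hθ hθ1).comp_tendsto
      tendsto_natCast_atTop_atTop).trans (natCast_rpow_mul_log_isBigO_add_one _))

lemma stepSizeSum_isBigO_rpow (hη₀ : 0 < η₀) (hθ : 0 < θ) (hθ1 : θ ≤ 1) (hν : 0 < ν)
    (hΩ : (ν, θ) ∉ logSet) :
    stepSizeSum η₀ θ ν =O[atTop] fun t : ℕ => ((t : ℝ) + 1) ^ rateExp ν θ :=
  (stepSizeSum_isBigO_majorant hη₀ hθ.le hν.le).trans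
    (((majorant_isBigO_rpow hη₀ hν hθ hθ1 hΩ).comp_tendsto
      tendsto_natCast_atTop_atTop).trans (natCast_rpow_isBigO_add_one _))

lemma stepSizeSum_eq_zero_of_rpow_mul_log_eq_zero {a : ℝ} {t : ℕ}
    (ht : ((t : ℝ) + 1) ^ a * log ((t : ℝ) + 1) = 0) : stepSizeSum η₀ θ ν t = 0 := by
  rcases t with _ | n
  · simp [stepSizeSum]
  · refine absurd ht (mul_pos (by positivity) (log_pos ?_)).ne'
    push_cast
    linarith [(Nat.cast_nonneg n : (0 : ℝ) ≤ n)]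

end Rates

/-- For step-sizes `η_k = η₀ k^{-θ}` with `η₀ > 0`, `0 < θ < 1`, and `ν > 0`,
there is a constant `C > 0` independent of `t` such that for every `t ≥ 1`,
`Σ_{k=1}^t η_k²/(1 + (Σ_{j=k+1}^t η_j)^ν)` is bounded by `C·(t+1)^ω·log(t+1)`
when `(ν,θ) ∈ Ω`, and by `C·(t+1)^ω` otherwise. -/
theorem stmt13 (η₀ θ ν : ℝ) (hη₀ : 0 < η₀) (hθ : 0 < θ) (hθ1 : θ < 1)
    (hν : 0 < ν) :
    ∃ C : ℝ, 0 < C ∧ ∀ t : ℕ, 1 ≤ t →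
      (((ν, θ) ∈ logSet →
          ∑ k ∈ Finset.Icc 1 t, (η₀ * (k : ℝ) ^ (-θ)) ^ 2 /
              (1 + (∑ j ∈ Finset.Icc (k + 1) t, η₀ * (j : ℝ) ^ (-θ)) ^ ν)
            ≤ C * ((t : ℝ) + 1) ^ rateExp ν θ * Real.log ((t : ℝ) + 1)) ∧
        ((ν, θ) ∉ logSet →
          ∑ k ∈ Finset.Icc 1 t, (η₀ * (k : ℝ) ^ (-θ)) ^ 2 /
              (1 + (∑ j ∈ Finset.Icc (k + 1) t, η₀ * (j : ℝ) ^ (-θ)) ^ ν)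
            ≤ C * ((t : ℝ) + 1) ^ rateExp ν θ)) := by
  by_cases hΩ : (ν, θ) ∈ logSet
  · obtain ⟨C, hC, h⟩ := exists_pos_le_mul_of_isBigO
      (stepSizeSum_isBigO_rpow_mul_log hη₀ hθ.le hθ1.le hν)
      (fun t => mul_nonneg (by positivity) (log_nonneg (by simp)))
      fun t => stepSizeSum_eq_zero_of_rpow_mul_log_eq_zero
    exact ⟨C, hC, fun t _ => ⟨fun _ => (h t).trans_eq (mul_assoc _ _ _).symm, absurd hΩ⟩⟩
  · obtain ⟨C, hC, h⟩ := exists_pos_le_mul_of_isBigO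
      (stepSizeSum_isBigO_rpow hη₀ hθ hθ1.le hν hΩ) (fun t => by positivity)
      fun t ht => absurd ht (by positivity)
    exact ⟨C, hC, fun t _ => ⟨fun h' => absurd h' hΩ, fun _ => h t⟩⟩
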